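/- If two terms t1 and t2 are unifiable (there exists a substitution θ with θ(t1) = θ(t2)), then the typed unification algorithm does not output wrong on input {t1 = t2}. -/
import Mathlib


/-- Base types for constants. -/
inductive Ty : Type
  | int | float | atom | str
  deriving DecidableEq

/-- First-order terms: variables, typed constants, and compound terms. -/
inductive Term : Type
  | var : ℕ → Term
  | const : ℕ → Ty → Term
  | app : ℕ → List Term → Term

mutual
  /-- Application of a substitution to a term. -/
  def subst (θ : ℕ → Term) : Term → Term
    | .var x => θ x
    | .const c τ => .const c τ
    | .app f ts => .app f (substList θ ts)
  /-- Application of a substitution to a list of terms. -/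
  def substList (θ : ℕ → Term) : List Term → List Term
    | [] => []
    | t :: ts => subst θ t :: substList θ ts
end

mutual
  /-- Occurrence of a variable in a term. -/
  def occurs (x : ℕ) : Term → Bool
    | .var y => x == y
    | .const _ _ => false
    | .app _ ts => occursList x ts
  /-- Occurrence of a variable in a list of terms. -/
  def occursList (x : ℕ) : List Term → Bool
    | [] => false
    | t :: ts => occurs x t || occursList x ts
end

/-- Composition of substitutions: (θ ∘ η)(X) = θ(η(X)). -/
def comp (θ η : ℕ → Term) : ℕ → Term := fun x => subst θ (η x)

/-- The substitution binding the single variable x to t. -/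
def single (x : ℕ) (t : Term) : ℕ → Term := fun y => if y = x then t else .var y

/-- θ is a unifier of t₁ and t₂. -/
def IsUnifier (θ : ℕ → Term) (t₁ t₂ : Term) : Prop := subst θ t₁ = subst θ t₂

/-- θ is a most general unifier of t₁ and t₂. -/
def IsMGU (θ : ℕ → Term) (t₁ t₂ : Term) : Prop :=
  IsUnifier θ t₁ t₂ ∧ ∀ η, IsUnifier η t₁ t₂ → ∃ δ, ∀ x, η x = subst δ (θ x)

/-- θ is idempotent. -/
def Idempotent (θ : ℕ → Term) : Prop := ∀ t, subst θ (subst θ t) = subst θ t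

/-- Configurations of the typed unification algorithm: a multiset of equations
together with the Boolean flag, or the halting value wrong. -/
inductive Config : Type
  | state : Multiset (Term × Term) → Bool → Config
  | wrong : Config

/-- Application of a single binding to an equation. -/
def substEq (x : ℕ) (t : Term) (e : Term × Term) : Term × Term :=
  (subst (single x t) e.1, subst (single x t) e.2)

/-- The rewrite rules of the typed unification algorithm. -/
inductive Step : Config → Config → Prop
  | decompose (f : ℕ) (ts ss : List Term) (R : Multiset (Term × Term)) (F : Bool)
      (h : ts.length = ss.length) :
      Step (.state ((Term.app f ts, Term.app f ss) ::ₘ R) F)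
           (.state (↑(ts.zip ss) + R) F)
  | clash (f g : ℕ) (ts ss : List Term) (R : Multiset (Term × Term)) (F : Bool)
      (h : f ≠ g ∨ ts.length ≠ ss.length) :
      Step (.state ((Term.app f ts, Term.app g ss) ::ₘ R) F) .wrong
  | constDel (c : ℕ) (τ : Ty) (R : Multiset (Term × Term)) (F : Bool) :
      Step (.state ((Term.const c τ, Term.const c τ) ::ₘ R) F) (.state R F)
  | constFalse (c d : ℕ) (τ : Ty) (R : Multiset (Term × Term)) (F : Bool) (h : c ≠ d) :
      Step (.state ((Term.const c τ, Term.const d τ) ::ₘ R) F) (.state R false)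
  | constWrong (c d : ℕ) (τ σ : Ty) (R : Multiset (Term × Term)) (F : Bool) (h : τ ≠ σ) :
      Step (.state ((Term.const c τ, Term.const d σ) ::ₘ R) F) .wrong
  | constApp (c : ℕ) (τ : Ty) (f : ℕ) (ts : List Term) (R : Multiset (Term × Term)) (F : Bool) :
      Step (.state ((Term.const c τ, Term.app f ts) ::ₘ R) F) .wrong
  | appConst (c : ℕ) (τ : Ty) (f : ℕ) (ts : List Term) (R : Multiset (Term × Term)) (F : Bool) :
      Step (.state ((Term.app f ts, Term.const c τ) ::ₘ R) F) .wrong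
  | varDel (x : ℕ) (R : Multiset (Term × Term)) (F : Bool) :
      Step (.state ((Term.var x, Term.var x) ::ₘ R) F) (.state R F)
  | orient (x : ℕ) (t : Term) (R : Multiset (Term × Term)) (F : Bool)
      (h : ∀ y, t ≠ Term.var y) :
      Step (.state ((t, Term.var x) ::ₘ R) F) (.state ((Term.var x, t) ::ₘ R) F)
  | eliminate (x : ℕ) (t : Term) (R : Multiset (Term × Term)) (F : Bool)
      (h₁ : occurs x t = false)
      (h₂ : ∃ e ∈ R, occurs x e.1 = true ∨ occurs x e.2 = true) :
      Step (.state ((Term.var x, t) ::ₘ R) F)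
           (.state ((Term.var x, t) ::ₘ R.map (substEq x t)) F)
  | occursFail (x : ℕ) (t : Term) (R : Multiset (Term × Term)) (F : Bool)
      (h₁ : occurs x t = true) (h₂ : t ≠ Term.var x) :
      Step (.state ((Term.var x, t) ::ₘ R) F) (.state R false)

/-- Reachability by rewrite steps. -/
def Reaches : Config → Config → Prop := Relation.ReflTransGen Step

/-- A configuration to which no rule applies. -/
def NormalCfg (c : Config) : Prop := ∀ c', ¬ Step c c'

/-- The typed unification algorithm on input S outputs wrong. -/
def OutputsWrong (S : Multiset (Term × Term)) : Prop :=
  Reaches (Config.state S true) Config.wrong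

/-- The typed unification algorithm on input S outputs false. -/
def OutputsFalse (S : Multiset (Term × Term)) : Prop :=
  ∃ S', Reaches (Config.state S true) (Config.state S' false) ∧ NormalCfg (Config.state S' false)

/-- The typed unification algorithm on input S₀ succeeds with solved set S. -/
def OutputsSet (S₀ S : Multiset (Term × Term)) : Prop :=
  Reaches (Config.state S₀ true) (Config.state S true) ∧ NormalCfg (Config.state S true)

/-- θ simultaneously unifies all equations in S. -/
def Unif (θ : ℕ → Term) (S : Multiset (Term × Term)) : Prop :=
  ∀ e ∈ S, subst θ e.1 = subst θ e.2

theorem substList_length (θ : ℕ → Term) : ∀ ts : List Term,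
    (substList θ ts).length = ts.length
  | [] => rfl
  | t :: ts => by simp [substList, substList_length θ ts]

mutual
theorem subst_single_eq (θ : ℕ → Term) (x : ℕ) (t : Term) (hx : θ x = subst θ t) :
    ∀ s : Term, subst θ (subst (single x t) s) = subst θ s
  | .var y => by
      by_cases h : y = x <;> simp [subst, single, h, hx]
  | .const c τ => rfl
  | .app f ts => by
      simp [subst, substList_single_eq θ x t hx ts]
theorem substList_single_eq (θ : ℕ → Term) (x : ℕ) (t : Term) (hx : θ x = subst θ t) :
    ∀ ss : List Term, substList θ (substList (single x t) ss) = substList θ ss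
  | [] => rfl
  | s :: ss => by
      simp [substList, subst_single_eq θ x t hx s, substList_single_eq θ x t hx ss]
end

theorem zip_unif (θ : ℕ → Term) : ∀ ts ss : List Term,
    substList θ ts = substList θ ss →
    ∀ p ∈ ts.zip ss, subst θ p.1 = subst θ p.2 := by
  intro ts
  induction ts with
  | nil => intro ss h p hp; simp at hp
  | cons a ts ih =>
      intro ss h p hp
      cases ss with
      | nil => simp at hp
      | cons b ss =>
          simp only [substList, List.cons.injEq] at h
          simp only [List.zip_cons_cons, List.mem_cons] at hp
          rcases hp with rfl | hp
          · exact h.1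
          · exact ih ss h.2 p hp

theorem step_preserve {S : Multiset (Term × Term)} {F : Bool} {c : Config}
    (hs : Step (.state S F) c) {θ : ℕ → Term} (hu : Unif θ S) :
    ∃ S' F', c = .state S' F' ∧ Unif θ S' := by
  generalize hcfg : Config.state S F = cfg at hs
  cases hs with
  | decompose f ts ss R F h =>
      cases hcfg
      have h1 := hu _ (Multiset.mem_cons_self _ _)
      have hR : Unif θ R := fun e he => hu e (Multiset.mem_cons_of_mem he)
      simp only [subst, Term.app.injEq] at h1
      refine ⟨_, _, rfl, fun e he => ?_⟩
      rw [Multiset.mem_add] at he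
      rcases he with he | he
      · exact zip_unif θ ts ss h1.2 e (by simpa using he)
      · exact hR e he
  | clash f g ts ss R F h =>
      cases hcfg
      have h1 := hu _ (Multiset.mem_cons_self _ _)
      simp only [subst, Term.app.injEq] at h1
      have hlen : ts.length = ss.length := by
        have := congrArg List.length h1.2
        simpa [substList_length] using this
      rcases h with h | h
      · exact absurd h1.1 h
      · exact absurd hlen h
  | constDel c τ R F =>
      cases hcfg
      exact ⟨_, _, rfl, fun e he => hu e (Multiset.mem_cons_of_mem he)⟩
  | constFalse c d τ R F h =>
      cases hcfg
      have h1 := hu _ (Multiset.mem_cons_self _ _)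
      simp only [subst, Term.const.injEq] at h1
      exact absurd h1.1 h
  | constWrong c d τ σ R F h =>
      cases hcfg
      have h1 := hu _ (Multiset.mem_cons_self _ _)
      simp only [subst, Term.const.injEq] at h1
      exact absurd h1.2 h
  | constApp c τ f ts R F =>
      cases hcfg
      have h1 := hu _ (Multiset.mem_cons_self _ _)
      simp [subst] at h1
  | appConst c τ f ts R F =>
      cases hcfg
      have h1 := hu _ (Multiset.mem_cons_self _ _)
      simp [subst] at h1
  | varDel x R F =>
      cases hcfg
      exact ⟨_, _, rfl, fun e he => hu e (Multiset.mem_cons_of_mem he)⟩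
  | orient x t R F h =>
      cases hcfg
      refine ⟨_, _, rfl, fun e he => ?_⟩
      rw [Multiset.mem_cons] at he
      rcases he with rfl | he
      · exact (hu _ (Multiset.mem_cons_self _ _)).symm
      · exact hu e (Multiset.mem_cons_of_mem he)
  | eliminate x t R F h₁ h₂ =>
      cases hcfg
      have h1 := hu _ (Multiset.mem_cons_self _ _)
      simp only [subst] at h1
      refine ⟨_, _, rfl, fun e he => ?_⟩
      rw [Multiset.mem_cons] at he
      rcases he with rfl | he
      · exact h1
      · rw [Multiset.mem_map] at he
        obtain ⟨e', he', rfl⟩ := he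
        have := hu e' (Multiset.mem_cons_of_mem he')
        simp only [substEq]
        rw [subst_single_eq θ x t h1, subst_single_eq θ x t h1, this]
  | occursFail x t R F h₁ h₂ =>
      cases hcfg
      exact ⟨_, _, rfl, fun e he => hu e (Multiset.mem_cons_of_mem he)⟩

theorem unif_not_reaches_wrong' {c : Config}
    (hr : Relation.ReflTransGen Step c .wrong) :
    ∀ {S : Multiset (Term × Term)} {F : Bool} {θ : ℕ → Term},
      c = .state S F → Unif θ S → False := by
  induction hr using Relation.ReflTransGen.head_induction_on with
  | refl => intro S F θ h _; cases h
  | head hstep hrest ih =>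
      intro S F θ h hu
      subst h
      obtain ⟨S', F', rfl, hu'⟩ := step_preserve hstep hu
      exact ih rfl hu'

theorem unif_not_reaches_wrong {S : Multiset (Term × Term)} {F : Bool} {θ : ℕ → Term}
    (hu : Unif θ S) (hr : Reaches (.state S F) .wrong) : False :=
  unif_not_reaches_wrong' hr rfl hu

/-- if t₁ and t₂ are unifiable, then the typed unification
algorithm does not output wrong on input {t₁ = t₂}. -/
theorem unifiable_not_wrong (t₁ t₂ : Term)
    (h : ∃ θ : ℕ → Term, IsUnifier θ t₁ t₂) :
    ¬ OutputsWrong {(t₁, t₂)} := by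
  obtain ⟨θ, hθ⟩ := h
  intro hw
  exact unif_not_reaches_wrong (θ := θ) (fun e he => by
    rw [Multiset.mem_singleton] at he; subst he; exact hθ) hw
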